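/- arXiv:1611.07743 — 4 statements merged into one kernel-verified Lean document; each statement's English description precedes it below -/
import Mathlib

section
/- Let k > 0 be a real number. Then the identity p₂^{k−1}·(1 − p₁) = p₂^k + p₃^k (real powers) holds for all real p₁, p₂, p₃ > 0 with p₁ + p₂ + p₃ = 1 if and only if k = 1. -/
theorem mixed_partials_identity_iff_k_eq_one (k : ℝ) (hk : 0 < k) :
    (∀ p₁ p₂ p₃ : ℝ, 0 < p₁ → 0 < p₂ → 0 < p₃ → p₁ + p₂ + p₃ = 1 →
      p₂ ^ (k - 1) * (1 - p₁) = p₂ ^ k + p₃ ^ k) ↔ k = 1 := by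
  constructor
  · intro h
    have key := h (1/4) (1/2) (1/4) (by norm_num) (by norm_num) (by norm_num) (by norm_num)
    -- key : (1/2)^(k-1) * (3/4) = (1/2)^k + (1/4)^k
    have h2 : ((1:ℝ)/2) ^ k = ((1:ℝ)/2) ^ (k-1) * (1/2) := by
      rw [← Real.rpow_add_one (by norm_num : (1:ℝ)/2 ≠ 0) (k-1)]
      norm_num
    have h4 : ((1:ℝ)/4) ^ k = ((1:ℝ)/4) ^ (k-1) * (1/4) := by
      rw [← Real.rpow_add_one (by norm_num : (1:ℝ)/4 ≠ 0) (k-1)]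
      norm_num
    rw [h2, h4] at key
    have heq : ((1:ℝ)/2) ^ (k-1) = ((1:ℝ)/4) ^ (k-1) := by nlinarith
    have hlog := congrArg Real.log heq
    rw [Real.log_rpow (by norm_num), Real.log_rpow (by norm_num)] at hlog
    have hne : Real.log (1/2) ≠ Real.log (1/4) := by
      have : Real.log (1/2) < Real.log 1 := Real.log_lt_log (by norm_num) (by norm_num)
      have h' : Real.log (1/4) < Real.log (1/2) := Real.log_lt_log (by norm_num) (by norm_num)
      linarith
    have : k - 1 = 0 := by
      by_contra hk1
      exact hne (mul_left_cancel₀ hk1 hlog)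
    linarith
  · intro hk1 p₁ p₂ p₃ h1 h2 h3 hsum
    subst hk1
    simp [Real.rpow_one]
    linarith
end

section
/- Let k > 0 be a real number with k ≠ 1. Define g : (Fin 3 → ℝ) → (Fin 3 → ℝ) by, writing p(i) = softmax(w)(i): g(w)(0) = −(1 − p(0))^k, and g(w)(j) = ((1 − p(0))^k / (p(1)^k + p(2)^k)) · p(j)^k for j ∈ {1, 2} (real powers). Then there is no function F : (Fin 3 → ℝ) → ℝ that is differentiable at every point and whose partial derivative at every w in every coordinate j equals g(w)(j). That is, the pseudo-gradient g with sensitivity parameter k ≠ 1 is not the gradient of any cost function. -/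
noncomputable def softmax {n : ℕ} (z : Fin n → ℝ) (j : Fin n) : ℝ :=
  Real.exp (z j) / ∑ i, Real.exp (z i)

noncomputable def pseudoGrad (k : ℝ) (w : Fin 3 → ℝ) (j : Fin 3) : ℝ :=
  if j = 0 then -((1 - softmax w 0) ^ k)
  else ((1 - softmax w 0) ^ k / (softmax w 1 ^ k + softmax w 2 ^ k)) * softmax w j ^ k

/-!
If `pseudoGrad k` were the gradient of a differentiable `F`, then, `pseudoGrad k` being itself
differentiable, symmetry of second derivatives would give `∂₁ g₀ = ∂₀ g₁`. Write `p = softmax w`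
and `Q = 1 - p₀`. Since `∂ⱼ pᵢ = pᵢ (δᵢⱼ - pⱼ)`, we get `∂₁ g₀ = -k Q^(k-1) p₀ p₁`. On the
other hand `g₁ = Q^k · T` with `T = exp (k w₁) / (exp (k w₁) + exp (k w₂))` independent of `w₀`,
so `∂₀ g₁ = -k Q^(k-1) p₀ Q T`. Equality forces `p₁ = (p₁ + p₂) T`, that is
`(k - 1) (w₁ - w₂) = 0`, which fails at `w = (0, 0, 1)`.
-/

open Real

theorem fderiv_apply_single_comm_of_fderiv_apply_single_eq {ι : Type*} [Fintype ι]
    [DecidableEq ι] {F : (ι → ℝ) → ℝ} {G : ι → (ι → ℝ) → ℝ}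
    (hF : ∀ w, DifferentiableAt ℝ F w) (hFG : ∀ w j, fderiv ℝ F w (Pi.single j 1) = G j w)
    {x : ι → ℝ} (hG : ∀ j, DifferentiableAt ℝ (G j) x) (i j : ι) :
    fderiv ℝ (G i) x (Pi.single j 1) = fderiv ℝ (G j) x (Pi.single i 1) := by
  let proj (l : ι) : (ι → ℝ) →L[ℝ] ℝ := ContinuousLinearMap.proj l
  have hfderiv : fderiv ℝ F = fun w => ∑ l, G l w • proj l := by
    funext w
    refine ContinuousLinearMap.coe_injective (LinearMap.pi_ext fun l c => ?_)
    have : (Pi.single l c : ι → ℝ) = c • Pi.single l 1 := by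
      rw [← Pi.single_smul', smul_eq_mul, mul_one]
    simp [this, hFG, proj, Pi.single_apply]
  have hfderiv' : HasFDerivAt (fderiv ℝ F)
      (∑ l, (fderiv ℝ (G l) x).smulRight (proj l)) x := by
    rw [hfderiv]
    exact HasFDerivAt.fun_sum fun l _ => (hG l).hasFDerivAt.smul_const (proj l)
  simpa [proj, Pi.single_apply] using
    second_derivative_symmetric (fun w => (hF w).hasFDerivAt) hfderiv'
      (Pi.single j 1) (Pi.single i 1)

section Softmax

variable {n : ℕ}

lemma softmax_pos (w : Fin n → ℝ) (i : Fin n) : 0 < softmax w i := by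
  have : Nonempty (Fin n) := ⟨i⟩
  unfold softmax; positivity

lemma differentiable_softmax (i : Fin n) :
    Differentiable ℝ fun w : Fin n → ℝ => softmax w i := by
  have : Nonempty (Fin n) := ⟨i⟩
  unfold softmax
  intro w
  have hS : (∑ l, exp (w l)) ≠ 0 := by positivity
  fun_prop (disch := exact hS)

lemma hasLineDerivAt_softmax (w v : Fin n → ℝ) (i : Fin n) :
    HasLineDerivAt ℝ (fun w => softmax w i)
      (softmax w i * (v i - ∑ l, softmax w l * v l)) w v := by
  have : Nonempty (Fin n) := ⟨i⟩
  have hexp (l : Fin n) :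
      HasDerivAt (fun t : ℝ => exp ((w + t • v) l)) (exp (w l) * v l) 0 := by
    simpa using ((hasDerivAt_id (0 : ℝ)).mul_const (v l)).const_add (w l) |>.exp
  have hS : (∑ l, exp (w l)) ≠ 0 := by positivity
  have := (hexp i).fun_div (HasDerivAt.fun_sum fun l _ => hexp l) (by simpa using hS)
  unfold HasLineDerivAt softmax
  refine this.congr_deriv ?_
  simp only [zero_smul, add_zero, div_mul_eq_mul_div, ← Finset.sum_div]
  field_simp

lemma sum_softmax [NeZero n] (w : Fin n → ℝ) : ∑ i, softmax w i = 1 := by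
  simp only [softmax, ← Finset.sum_div]
  exact div_self (by positivity)

end Softmax

section PseudoGrad

variable (k : ℝ) (w : Fin 3 → ℝ)

lemma one_sub_softmax_zero_pos : 0 < 1 - softmax w 0 := by
  have h := sum_softmax w
  rw [Fin.sum_univ_three] at h
  linarith [softmax_pos w 1, softmax_pos w 2]

lemma pseudoGrad_of_ne_zero {j : Fin 3} (hj : j ≠ 0) :
    pseudoGrad k w j =
      (1 - softmax w 0) ^ k * (exp (k * w j) / (exp (k * w 1) + exp (k * w 2))) := by
  have hpow (i : Fin 3) : softmax w i ^ k = exp (k * w i) / (∑ l, exp (w l)) ^ k := by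
    rw [softmax, div_rpow (exp_pos _).le (by positivity), ← exp_mul, mul_comm]
  have hS : 0 < (∑ l, exp (w l)) ^ k := by positivity
  rw [pseudoGrad, if_neg hj, hpow, hpow, hpow]
  field_simp

lemma differentiableAt_pseudoGrad (j : Fin 3) :
    DifferentiableAt ℝ (fun w => pseudoGrad k w j) w := by
  have hQ : DifferentiableAt ℝ (fun w => (1 - softmax w 0) ^ k) w :=
    ((differentiable_softmax 0 w).const_sub 1).rpow_const (Or.inl (one_sub_softmax_zero_pos w).ne')
  by_cases hj : j = 0
  · subst hj
    simpa [pseudoGrad] using hQ.neg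
  · simp_rw [pseudoGrad_of_ne_zero k _ hj]
    have hT : exp (k * w 1) + exp (k * w 2) ≠ 0 := by positivity
    fun_prop (disch := exact hT)

lemma hasLineDerivAt_one_sub_softmax_zero_rpow (v : Fin 3 → ℝ) :
    HasLineDerivAt ℝ (fun w => (1 - softmax w 0) ^ k)
      (k * (1 - softmax w 0) ^ (k - 1) * -(softmax w 0 * (v 0 - ∑ l, softmax w l * v l)))
      w v := by
  have h := (HasDerivAt.const_sub 1 (hasLineDerivAt_softmax w v 0)).rpow_const (p := k)
    (Or.inl (by simpa using (one_sub_softmax_zero_pos w).ne'))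
  simp only [zero_smul, add_zero] at h
  exact h.congr_deriv (by ring)

lemma fderiv_pseudoGrad_zero_single_one :
    fderiv ℝ (fun w => pseudoGrad k w 0) w (Pi.single 1 1) =
      -(k * (1 - softmax w 0) ^ (k - 1) * (softmax w 0 * softmax w 1)) := by
  have h := HasDerivAt.fun_neg (hasLineDerivAt_one_sub_softmax_zero_rpow k w (Pi.single 1 1))
  refine ((differentiableAt_pseudoGrad k w 0).hasFDerivAt.hasLineDerivAt _).unique ?_
  simpa [HasLineDerivAt, pseudoGrad, Pi.single_apply] using h

lemma fderiv_pseudoGrad_one_single_zero :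
    fderiv ℝ (fun w => pseudoGrad k w 1) w (Pi.single 0 1) =
      -(k * (1 - softmax w 0) ^ (k - 1) * (softmax w 0 * (1 - softmax w 0))) *
        (exp (k * w 1) / (exp (k * w 1) + exp (k * w 2))) := by
  have h := HasDerivAt.mul_const (hasLineDerivAt_one_sub_softmax_zero_rpow k w (Pi.single 0 1))
    (exp (k * w 1) / (exp (k * w 1) + exp (k * w 2)))
  refine ((differentiableAt_pseudoGrad k w 1).hasFDerivAt.hasLineDerivAt _).unique ?_
  simp only [HasLineDerivAt, pseudoGrad_of_ne_zero k _ one_ne_zero]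
  simpa [Pi.single_apply] using h

end PseudoGrad

lemma softmax_one_ne_one_sub_softmax_zero_mul {k : ℝ} (hk1 : k ≠ 1) {w : Fin 3 → ℝ}
    (hw : w 1 ≠ w 2) :
    softmax w 1 ≠ (1 - softmax w 0) * (exp (k * w 1) / (exp (k * w 1) + exp (k * w 2))) := by
  intro h
  have hS : 0 < ∑ l, exp (w l) := by positivity
  have hQ : 1 - softmax w 0 = (exp (w 1) + exp (w 2)) / ∑ l, exp (w l) := by
    simp only [softmax, Fin.sum_univ_three] at hS ⊢
    field_simp
    ring
  rw [hQ, softmax] at h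
  field_simp at h
  have hexp : exp (w 1 + k * w 2) = exp (w 2 + k * w 1) := by
    simp only [exp_add]
    linear_combination h
  exact hw (mul_left_cancel₀ (sub_ne_zero.mpr hk1) (by linear_combination -exp_injective hexp))

lemma fderiv_pseudoGrad_mixed_ne {k : ℝ} (hk : k ≠ 0) (hk1 : k ≠ 1) {w : Fin 3 → ℝ}
    (hw : w 1 ≠ w 2) :
    fderiv ℝ (fun w => pseudoGrad k w 0) w (Pi.single 1 1) ≠
      fderiv ℝ (fun w => pseudoGrad k w 1) w (Pi.single 0 1) := by
  rw [fderiv_pseudoGrad_zero_single_one, fderiv_pseudoGrad_one_single_zero]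
  intro h
  have hc : k * (1 - softmax w 0) ^ (k - 1) * softmax w 0 ≠ 0 :=
    mul_ne_zero (mul_ne_zero hk (rpow_pos_of_pos (one_sub_softmax_zero_pos w) _).ne')
      (softmax_pos w 0).ne'
  exact softmax_one_ne_one_sub_softmax_zero_mul hk1 hw
    (mul_left_cancel₀ hc (by linear_combination -h))

theorem pseudoGradient_not_a_gradient (k : ℝ) (hk : 0 < k) (hk1 : k ≠ 1) :
    ¬ ∃ F : (Fin 3 → ℝ) → ℝ,
        (∀ w : Fin 3 → ℝ, DifferentiableAt ℝ F w) ∧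
        ∀ (w : Fin 3 → ℝ) (j : Fin 3),
          fderiv ℝ F w (Pi.single j 1) = pseudoGrad k w j := by
  rintro ⟨F, hF, hFg⟩
  exact fderiv_pseudoGrad_mixed_ne hk.ne' hk1 (w := Pi.single 2 1) (by simp)
    (fderiv_apply_single_comm_of_fderiv_apply_single_eq (G := fun j w => pseudoGrad k w j)
      hF hFg (differentiableAt_pseudoGrad k _) 0 1)
end

section
/- Let 1/2 < α < 1 and let w ∈ ℝ with w ≠ 0. With CE(w, b) = −(1/2)·(∫_{−1}^{0} log(exp(w·x + b)/(exp(w·x + b) + 1)) dx + ∫_{0}^{α} log(1/(exp(w·x + b) + 1)) dx + ∫_{α}^{1} log(exp(w·x + b)/(exp(w·x + b) + 1)) dx), the function b ↦ CE(w, b) is differentiable at b = 0 and its derivative there equals (α − 1)/2; in particular this derivative is nonzero. -/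
noncomputable def CE (α w b : ℝ) : ℝ :=
  -(1 / 2) *
    ((∫ x in (-1 : ℝ)..0,
        Real.log (Real.exp (w * x + b) / (Real.exp (w * x + b) + 1)))
      + (∫ x in (0 : ℝ)..α, Real.log (1 / (Real.exp (w * x + b) + 1)))
      + (∫ x in α..(1 : ℝ),
          Real.log (Real.exp (w * x + b) / (Real.exp (w * x + b) + 1))))

/-!
The class probabilities are `σ(u)` and `1 - σ(u)` with `σ` the sigmoid and `u = w x + b`, and
`d/du log σ(u) = 1 - σ(u)`, `d/du log (1 - σ(u)) = -σ(u)`. These derivatives are bounded, so one may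
differentiate under the integral sign: at `b = 0` the derivative of `CE` is
`-(1/2) (2 - α - ∫_{-1}^{1} σ(w x) dx)`. Since `σ(u) + σ(-u) = 1`, the last integral is `1` for
every `w`, leaving `(α - 1) / 2`.
-/

open Real MeasureTheory

lemma hasDerivAt_log_exp_add_one (u : ℝ) :
    HasDerivAt (fun u => log (exp u + 1)) (sigmoid u) u := by
  convert ((hasDerivAt_exp u).add_const 1).log (by positivity) using 1
  rw [sigmoid_def, exp_neg]
  field_simp

lemma log_exp_div_exp_add_one (u : ℝ) :
    log (exp u / (exp u + 1)) = u - log (exp u + 1) := by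
  rw [log_div (exp_pos u).ne' (by positivity), log_exp]

lemma hasDerivAt_log_exp_div_exp_add_one (u : ℝ) :
    HasDerivAt (fun u => log (exp u / (exp u + 1))) (1 - sigmoid u) u := by
  simpa only [log_exp_div_exp_add_one] using
    (hasDerivAt_id' u).fun_sub (hasDerivAt_log_exp_add_one u)

lemma hasDerivAt_log_one_div_exp_add_one (u : ℝ) :
    HasDerivAt (fun u => log (1 / (exp u + 1))) (-sigmoid u) u := by
  simpa only [one_div, log_inv] using (hasDerivAt_log_exp_add_one u).fun_neg

lemma abs_sigmoid_le_one (u : ℝ) : |sigmoid u| ≤ 1 :=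
  abs_le.2 ⟨by linarith [sigmoid_pos u], sigmoid_le_one u⟩

theorem hasDerivAt_intervalIntegral_comp_add {E : Type*} [NormedAddCommGroup E]
    [NormedSpace ℝ E] {μ : Measure ℝ} [IsLocallyFiniteMeasure μ] {g g' : ℝ → E} {f : ℝ → ℝ}
    {C : ℝ} (hg : ∀ u, HasDerivAt g (g' u) u) (hg' : Continuous g') (hg'_le : ∀ u, ‖g' u‖ ≤ C)
    (hf : Continuous f) (a c b₀ : ℝ) :
    HasDerivAt (fun b => ∫ x in a..c, g (f x + b) ∂μ) (∫ x in a..c, g' (f x + b₀) ∂μ) b₀ := by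
  have hg_cont : Continuous g := continuous_iff_continuousAt.2 fun u => (hg u).continuousAt
  have hcomp : ∀ {h : ℝ → E}, Continuous h → ∀ b, Continuous fun x => h (f x + b) :=
    fun hh b => hh.comp (hf.add continuous_const)
  refine (intervalIntegral.hasDerivAt_integral_of_dominated_loc_of_deriv_le
    (F' := fun b x => g' (f x + b)) (bound := fun _ => C) Filter.univ_mem
    (.of_forall fun b => (hcomp hg_cont b).aestronglyMeasurable)
    ((hcomp hg_cont b₀).intervalIntegrable _ _) (hcomp hg' b₀).aestronglyMeasurable
    (.of_forall fun _ _ _ _ => hg'_le _) intervalIntegrable_const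
    (.of_forall fun x _ b _ => ?_)).2
  exact (hg (f x + b)).comp_const_add (f x) b

lemma intervalIntegrable_sigmoid_mul (w a c : ℝ) :
    IntervalIntegrable (fun x => sigmoid (w * x)) volume a c :=
  (continuous_sigmoid.comp (continuous_const.mul continuous_id)).intervalIntegrable _ _

theorem integral_neg_self_sigmoid_mul (w a : ℝ) : ∫ x in -a..a, sigmoid (w * x) = a := by
  have hsym : ∫ x in -a..a, sigmoid (w * -x) = ∫ x in -a..a, sigmoid (w * x) := by
    rw [intervalIntegral.integral_comp_neg (fun x => sigmoid (w * x)), neg_neg]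
  have hsum : ∫ x in -a..a, (sigmoid (w * x) + sigmoid (w * -x)) = 2 * a := by
    simp_rw [mul_neg, sigmoid_neg, add_sub_cancel, intervalIntegral.integral_const]
    simp only [sub_neg_eq_add, smul_eq_mul, mul_one]
    ring
  rw [intervalIntegral.integral_add (intervalIntegrable_sigmoid_mul w _ _)
    (by simpa using intervalIntegrable_sigmoid_mul (-w) (-a) a), hsym] at hsum
  linarith

lemma integral_one_sub_sigmoid_add_integral_neg_sigmoid (α w : ℝ) :
    (∫ x in (-1 : ℝ)..0, (1 - sigmoid (w * x))) + (∫ x in (0 : ℝ)..α, -sigmoid (w * x))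
      + (∫ x in α..(1 : ℝ), (1 - sigmoid (w * x))) = 1 - α := by
  have htotal := integral_neg_self_sigmoid_mul w 1
  rw [← intervalIntegral.integral_add_adjacent_intervals (intervalIntegrable_sigmoid_mul w (-1) 0)
      (intervalIntegrable_sigmoid_mul w 0 1),
    ← intervalIntegral.integral_add_adjacent_intervals (intervalIntegrable_sigmoid_mul w 0 α)
      (intervalIntegrable_sigmoid_mul w α 1)] at htotal
  simp only [intervalIntegral.integral_sub intervalIntegrable_const
      (intervalIntegrable_sigmoid_mul w _ _),
    intervalIntegral.integral_neg, intervalIntegral.integral_const, smul_eq_mul]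
  linarith

theorem CE_deriv_at_zero_nonzero_general (α : ℝ) (hα₂ : α < 1)
    (w : ℝ) :
    HasDerivAt (fun b : ℝ => CE α w b) ((α - 1) / 2) 0 ∧ (α - 1) / 2 ≠ 0 := by
  have hlin : Continuous fun x : ℝ => w * x := continuous_const.mul continuous_id
  have hlogσ := hasDerivAt_intervalIntegral_comp_add (μ := volume)
    hasDerivAt_log_exp_div_exp_add_one (continuous_const.sub continuous_sigmoid)
    (fun u => sigmoid_neg u ▸ abs_sigmoid_le_one (-u)) hlin
  have hlog1σ := hasDerivAt_intervalIntegral_comp_add (μ := volume)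
    hasDerivAt_log_one_div_exp_add_one continuous_sigmoid.neg
    (fun u => (abs_neg _).trans_le (abs_sigmoid_le_one u)) hlin
  have hCE :=
    (((hlogσ (-1) 0 0).fun_add (hlog1σ 0 α 0)).fun_add (hlogσ α 1 0)).const_mul (-(1 / 2))
  simp only [add_zero, integral_one_sub_sigmoid_add_integral_neg_sigmoid] at hCE
  exact ⟨hCE.congr_deriv (by ring), by linarith⟩

theorem CE_deriv_at_zero_nonzero (α : ℝ) (hα₁ : 1 / 2 < α) (hα₂ : α < 1)
    (w : ℝ) (hw : w ≠ 0) :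
    HasDerivAt (fun b : ℝ => CE α w b) ((α - 1) / 2) 0 ∧ (α - 1) / 2 ≠ 0 :=
  CE_deriv_at_zero_nonzero_general α hα₂ w
end

section
/- Let 1/2 < α < 1 and let w ∈ ℝ with w ≠ 0. With CE(w, b) = −(1/2)·(∫_{−1}^{0} log(exp(w·x + b)/(exp(w·x + b) + 1)) dx + ∫_{0}^{α} log(1/(exp(w·x + b) + 1)) dx + ∫_{α}^{1} log(exp(w·x + b)/(exp(w·x + b) + 1)) dx), the function b ↦ CE(w, b) does not have a local minimum at b = 0. Consequently, the expected cross-entropy has no minimizer whose induced classification threshold −b/w equals 0. -/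
/-!
Translating `b` moves the three integration windows of `u = w x + b` rigidly, so the derivative of
`b ↦ CE α w b` is read off the endpoint values of `log σ` and `log (1 - σ) = log σ(-·)`.
Since `log σ(u) - log σ(-u) = u`, at `b = 0` these telescope to `(α - 1) / 2 ≠ 0`, so `b = 0` is
not even a critical point. A threshold `-b / w = 0` forces `b = 0`, and a global minimiser there
would be a local one.
-/

open Real

namespace Real

lemma exp_div_exp_add_one (u : ℝ) : exp u / (exp u + 1) = sigmoid u := by
  rw [sigmoid_def]
  field_simp
  rw [mul_add, ← exp_add, add_neg_cancel, exp_zero, mul_one]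

lemma one_div_exp_add_one (u : ℝ) : 1 / (exp u + 1) = sigmoid (-u) := by
  rw [sigmoid_def, neg_neg, add_comm, one_div]

lemma continuous_log_sigmoid : Continuous fun u => log (sigmoid u) :=
  continuous_sigmoid.log fun u => (sigmoid_pos u).ne'

lemma log_sigmoid_sub_log_sigmoid_neg (u : ℝ) : log (sigmoid u) - log (sigmoid (-u)) = u := by
  have h : sigmoid u = sigmoid (-u) * exp u := by
    simpa only [neg_neg] using (sigmoid_mul_rexp_neg (-u)).symm
  rw [h, log_mul (sigmoid_pos _).ne' (exp_pos u).ne', log_exp, add_sub_cancel_left]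

end Real

namespace intervalIntegral

theorem hasDerivAt_integral_comp_mul_add {f : ℝ → ℝ} (hf : Continuous f) {w : ℝ} (hw : w ≠ 0)
    (a c b : ℝ) :
    HasDerivAt (fun b => ∫ x in a..c, f (w * x + b)) ((f (w * c + b) - f (w * a + b)) / w) b := by
  set F : ℝ → ℝ := fun u => ∫ t in (0 : ℝ)..u, f t
  have hF (u : ℝ) : HasDerivAt F (f u) u := hf.integral_hasStrictDerivAt 0 u |>.hasDerivAt
  have hshift (p : ℝ) : HasDerivAt (fun b => F (w * p + b)) (f (w * p + b)) b := by
    simpa [Function.comp_def] using (hF (w * p + b)).comp b ((hasDerivAt_id b).const_add (w * p))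
  have hrepr : (fun b => ∫ x in a..c, f (w * x + b)) =
      fun b => w⁻¹ * (F (w * c + b) - F (w * a + b)) := by
    funext b
    rw [integral_comp_mul_add _ hw, smul_eq_mul,
      integral_interval_sub_left (hf.intervalIntegrable _ _) (hf.intervalIntegrable _ _)]
  rw [hrepr, div_eq_inv_mul]
  exact ((hshift c).sub (hshift a)).const_mul w⁻¹

end intervalIntegral

open intervalIntegral

lemma CE_eq_integral_log_sigmoid (α w b : ℝ) :
    CE α w b = -(1 / 2) * ((∫ x in (-1 : ℝ)..0, log (sigmoid (w * x + b)))
      + (∫ x in (0 : ℝ)..α, log (sigmoid (-(w * x + b))))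
      + (∫ x in α..(1 : ℝ), log (sigmoid (w * x + b)))) := by
  simp only [CE, exp_div_exp_add_one, one_div_exp_add_one]

theorem hasDerivAt_CE {w : ℝ} (hw : w ≠ 0) (α b : ℝ) :
    HasDerivAt (fun b => CE α w b)
      (-(1 / 2) * ((log (sigmoid (w * 0 + b)) - log (sigmoid (w * -1 + b))) / w
        + (log (sigmoid (-(w * α + b))) - log (sigmoid (-(w * 0 + b)))) / w
        + (log (sigmoid (w * 1 + b)) - log (sigmoid (w * α + b))) / w)) b := by
  simp only [CE_eq_integral_log_sigmoid]
  have hℓ := continuous_log_sigmoid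
  have hℓneg : Continuous fun u => log (sigmoid (-u)) := hℓ.comp continuous_neg
  exact (((hasDerivAt_integral_comp_mul_add hℓ hw (-1) 0 b).add
    (hasDerivAt_integral_comp_mul_add hℓneg hw 0 α b)).add
    (hasDerivAt_integral_comp_mul_add hℓ hw α 1 b)).const_mul _

theorem hasDerivAt_CE_zero (α : ℝ) {w : ℝ} (hw : w ≠ 0) :
    HasDerivAt (fun b => CE α w b) ((α - 1) / 2) 0 := by
  convert hasDerivAt_CE hw α 0 using 1
  have h1 := log_sigmoid_sub_log_sigmoid_neg w
  have hα := log_sigmoid_sub_log_sigmoid_neg (w * α)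
  have htelescope : log (sigmoid 0) - log (sigmoid (-w))
      + (log (sigmoid (-(w * α))) - log (sigmoid 0))
      + (log (sigmoid w) - log (sigmoid (w * α))) = w * (1 - α) := by
    linear_combination h1 - hα
  simp only [mul_zero, add_zero, neg_zero, mul_neg, mul_one]
  rw [← add_div, ← add_div, htelescope, mul_div_cancel_left₀ _ hw]
  ring

theorem CE_no_local_min_at_threshold_zero_general (α : ℝ) (hα₂ : α < 1)
    (w : ℝ) (hw : w ≠ 0) :
    ¬ IsLocalMin (fun b : ℝ => CE α w b) 0 ∧
    ¬ ∃ b : ℝ, -b / w = 0 ∧ ∀ b' : ℝ, CE α w b ≤ CE α w b' := by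
  have hnotMin : ¬ IsLocalMin (fun b : ℝ => CE α w b) 0 := fun hmin =>
    (show (α - 1) / 2 ≠ 0 by linarith) (hmin.hasDerivAt_eq_zero (hasDerivAt_CE_zero α hw))
  refine ⟨hnotMin, ?_⟩
  rintro ⟨b, hb, hmin⟩
  obtain rfl : b = 0 := by simpa [hw] using hb
  exact hnotMin (Filter.Eventually.of_forall hmin)

theorem CE_no_local_min_at_threshold_zero (α : ℝ) (hα₁ : 1 / 2 < α) (hα₂ : α < 1)
    (w : ℝ) (hw : w ≠ 0) :
    ¬ IsLocalMin (fun b : ℝ => CE α w b) 0 ∧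
    ¬ ∃ b : ℝ, -b / w = 0 ∧ ∀ b' : ℝ, CE α w b ≤ CE α w b' :=
  CE_no_local_min_at_threshold_zero_general α hα₂ w hw
end
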